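/- The inclusion Ω_d + Ω_{d'} ⊆ Ω_{d+d'} can be strict: for the weight lattice Ω of the root system E8 (which is self-dual), Ω_1 = {0} while Ω_2 ≠ {0}, so Ω_1 + Ω_1 is a proper subset of Ω_2. -/

import Mathlib

open scoped Pointwise

/-- The `E8` lattice in `ℝ⁸`: vectors with all-integer or all-half-integer coordinates
whose coordinate sum is even. -/
def E8 : Set (EuclideanSpace ℝ (Fin 8)) :=
  {x | ((∀ i, ∃ n : ℤ, x i = n) ∨ (∀ i, ∃ n : ℤ, x i = n + 1/2)) ∧ ∃ m : ℤ, ∑ i, x i = 2 * m}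

/-- The dual lattice of a set `L ⊆ ℝ⁸`. -/
def dualSet (L : Set (EuclideanSpace ℝ (Fin 8))) : Set (EuclideanSpace ℝ (Fin 8)) :=
  {l | ∀ μ ∈ L, ∃ n : ℤ, (inner ℝ μ l : ℝ) = n}

/-- The Voronoï cell of a set `L`. -/
def vorCell (L : Set (EuclideanSpace ℝ (Fin 8))) : Set (EuclideanSpace ℝ (Fin 8)) :=
  {u | ∀ l ∈ L, ‖u‖ ≤ ‖u - l‖}

/-- `Ω_d = Ω ∩ d·Vor(Λ)` for the `E8` lattice `Ω` with dual lattice `Λ`. -/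
def E8pts (d : ℕ) : Set (EuclideanSpace ℝ (Fin 8)) :=
  E8 ∩ (d : ℝ) • vorCell (dualSet E8)

open scoped RealInnerProductSpace

section Aux

lemma aux_int_mul_pred (n : ℤ) : 0 ≤ n * (n - 1) := by
  rcases le_or_gt n 0 with h | h
  · nlinarith
  · nlinarith

lemma aux_int_mul_succ (n : ℤ) : 0 ≤ n * (n + 1) := by
  rcases le_or_gt n (-1) with h | h
  · nlinarith
  · nlinarith

lemma aux_inner_eq (x y : EuclideanSpace ℝ (Fin 8)) : ⟪x, y⟫ = ∑ i, x i * y i := by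
  simp [PiLp.inner_apply, RCLike.inner_apply, conj_trivial]
  exact Finset.sum_congr rfl fun i _ => mul_comm _ _

/-- Test vector `e_i + ε e_j`. -/
noncomputable def tv (i j : Fin 8) (ε : ℝ) : EuclideanSpace ℝ (Fin 8) :=
  EuclideanSpace.single i (1:ℝ) + EuclideanSpace.single j ε

lemma tv_apply (i j k : Fin 8) (ε : ℝ) :
    tv i j ε k = (if k = i then (1:ℝ) else 0) + (if k = j then ε else 0) := by
  simp [tv, EuclideanSpace.single_apply]

/-- The all-halves vector. -/
noncomputable def hv : EuclideanSpace ℝ (Fin 8) := WithLp.toLp 2 (fun _ => (1/2 : ℝ))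

lemma hv_apply (k : Fin 8) : hv k = 1/2 := rfl

lemma tv_inner (i j : Fin 8) (hij : i ≠ j) (ε : ℝ) (l : EuclideanSpace ℝ (Fin 8)) :
    ⟪tv i j ε, l⟫ = l i + ε * l j := by
  rw [aux_inner_eq]
  have h : ∀ k ∈ Finset.univ, tv i j ε k * l k
      = (if k = i then l k else 0) + (if k = j then ε * l k else 0) := by
    intro k _
    rw [tv_apply]
    split_ifs <;> ring
  rw [Finset.sum_congr rfl h, Finset.sum_add_distrib,
    Finset.sum_ite_eq' Finset.univ i (fun k => l k),
    Finset.sum_ite_eq' Finset.univ j (fun k => ε * l k)]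
  simp

lemma tv_sum (i j : Fin 8) (hij : i ≠ j) (ε : ℝ) : ∑ k, tv i j ε k = 1 + ε := by
  have h : ∀ k ∈ Finset.univ, tv i j ε k
      = (if k = i then (1:ℝ) else 0) + (if k = j then ε else 0) := fun k _ => tv_apply i j k ε
  rw [Finset.sum_congr rfl h, Finset.sum_add_distrib,
    Finset.sum_ite_eq' Finset.univ i (fun _ => (1:ℝ)),
    Finset.sum_ite_eq' Finset.univ j (fun _ => ε)]
  simp

lemma tv_mem (i j : Fin 8) (hij : i ≠ j) (ε : ℝ) (hε : ε = 1 ∨ ε = -1) : tv i j ε ∈ E8 := by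
  constructor
  · left
    intro k
    rcases hε with h | h <;> subst h
    · exact ⟨(if k = i then 1 else 0) + (if k = j then 1 else 0),
        by rw [tv_apply]; push_cast; split_ifs <;> norm_num⟩
    · exact ⟨(if k = i then 1 else 0) + (if k = j then -1 else 0),
        by rw [tv_apply]; push_cast; split_ifs <;> norm_num⟩
  · rcases hε with h | h <;> subst h
    · exact ⟨1, by rw [tv_sum i j hij]; norm_num⟩
    · exact ⟨0, by rw [tv_sum i j hij]; norm_num⟩

lemma hv_mem : hv ∈ E8 := by
  refine ⟨Or.inr fun i => ⟨0, by rw [hv_apply]; norm_num⟩, ⟨2, ?_⟩⟩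
  have h : ∀ k ∈ Finset.univ, hv k = (1:ℝ)/2 := fun k _ => rfl
  rw [Finset.sum_congr rfl h]
  simp only [Finset.sum_const, Finset.card_univ, Fintype.card_fin]
  norm_num

/-- `E8 ⊆ dualSet E8`. -/
lemma aux_E8_subset_dual : E8 ⊆ dualSet E8 := by
  rintro l ⟨hl, ml, hml⟩ μ ⟨hμ, mμ, hmμ⟩
  rw [aux_inner_eq]
  rcases hμ with hμ | hμ <;> rcases hl with hl | hl
  · choose a ha using hμ; choose b hb using hl
    refine ⟨∑ i, a i * b i, ?_⟩
    push_cast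
    exact Finset.sum_congr rfl fun i _ => by rw [ha i, hb i]
  · choose a ha using hμ; choose b hb using hl
    have hsum : (∑ i, (a i : ℝ)) = 2 * mμ := by
      rw [← hmμ]; exact Finset.sum_congr rfl fun i _ => (ha i).symm
    refine ⟨(∑ i, a i * b i) + mμ, ?_⟩
    have h : ∀ i ∈ Finset.univ, μ i * l i = (a i : ℝ) * b i + (a i : ℝ) * (1/2) := by
      intro i _; rw [ha i, hb i]; ring
    rw [Finset.sum_congr rfl h, Finset.sum_add_distrib, ← Finset.sum_mul, hsum]
    push_cast; ring
  · choose a ha using hμ; choose b hb using hl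
    have hsum : (∑ i, (b i : ℝ)) = 2 * ml := by
      rw [← hml]; exact Finset.sum_congr rfl fun i _ => (hb i).symm
    refine ⟨(∑ i, a i * b i) + ml, ?_⟩
    have h : ∀ i ∈ Finset.univ, μ i * l i = (a i : ℝ) * b i + (b i : ℝ) * (1/2) := by
      intro i _; rw [ha i, hb i]; ring
    rw [Finset.sum_congr rfl h, Finset.sum_add_distrib, ← Finset.sum_mul, hsum]
    push_cast; ring
  · choose a ha using hμ; choose b hb using hl
    have hsa : (∑ i, (a i : ℝ)) = 2 * mμ - 4 := by
      have h : (∑ i, μ i) = ∑ i, ((a i : ℝ) + 1/2) :=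
        Finset.sum_congr rfl fun i _ => ha i
      rw [h, Finset.sum_add_distrib] at hmμ
      simp only [Finset.sum_const, Finset.card_univ, Fintype.card_fin] at hmμ
      norm_num at hmμ; linarith
    have hsb : (∑ i, (b i : ℝ)) = 2 * ml - 4 := by
      have h : (∑ i, l i) = ∑ i, ((b i : ℝ) + 1/2) :=
        Finset.sum_congr rfl fun i _ => hb i
      rw [h, Finset.sum_add_distrib] at hml
      simp only [Finset.sum_const, Finset.card_univ, Fintype.card_fin] at hml
      norm_num at hml; linarith
    refine ⟨(∑ i, a i * b i) + mμ + ml - 2, ?_⟩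
    have h : ∀ i ∈ Finset.univ, μ i * l i =
        (a i : ℝ) * b i + (a i : ℝ) * (1/2) + (b i : ℝ) * (1/2) + 1/4 := by
      intro i _; rw [ha i, hb i]; ring
    rw [Finset.sum_congr rfl h, Finset.sum_add_distrib, Finset.sum_add_distrib,
      Finset.sum_add_distrib, ← Finset.sum_mul, ← Finset.sum_mul, hsa, hsb]
    simp only [Finset.sum_const, Finset.card_univ, Fintype.card_fin]
    push_cast; ring

/-- `dualSet E8 ⊆ E8`. -/
lemma aux_dual_subset_E8 : dualSet E8 ⊆ E8 := by
  intro l hl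
  have hpair : ∀ (i j : Fin 8), i ≠ j →
      (∃ n : ℤ, l i + l j = n) ∧ (∃ n : ℤ, l i - l j = n) := by
    intro i j hij
    constructor
    · obtain ⟨n, hn⟩ := hl _ (tv_mem i j hij 1 (Or.inl rfl))
      rw [show (inner ℝ (tv i j 1) l : ℝ) = ⟪tv i j 1, l⟫ from rfl, tv_inner i j hij] at hn
      exact ⟨n, by linarith⟩
    · obtain ⟨n, hn⟩ := hl _ (tv_mem i j hij (-1) (Or.inr rfl))
      rw [show (inner ℝ (tv i j (-1)) l : ℝ) = ⟪tv i j (-1), l⟫ from rfl, tv_inner i j hij] at hn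
      exact ⟨n, by linarith⟩
  have hdiff : ∀ i : Fin 8, ∃ n : ℤ, l i - l 0 = n := by
    intro i
    by_cases h : i = 0
    · exact ⟨0, by rw [h]; simp⟩
    · exact (hpair i 0 h).2
  choose d hd using hdiff
  obtain ⟨a, ha⟩ := (hpair 0 1 (by decide)).1
  obtain ⟨b, hb⟩ := (hpair 0 1 (by decide)).2
  have h2l0 : 2 * l 0 = ((a + b : ℤ) : ℝ) := by push_cast; linarith
  have hsum : ∃ m : ℤ, ∑ i, l i = 2 * m := by
    obtain ⟨n, hn⟩ := hl _ hv_mem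
    rw [aux_inner_eq] at hn
    have h : ∀ i ∈ Finset.univ, hv i * l i = (1/2) * l i := by
      intro i _; rw [hv_apply]
    rw [Finset.sum_congr rfl h, ← Finset.mul_sum] at hn
    exact ⟨n, by push_cast; linarith⟩
  refine ⟨?_, hsum⟩
  rcases Int.even_or_odd (a + b) with ⟨c, hc⟩ | ⟨c, hc⟩
  · left
    intro i
    refine ⟨c + d i, ?_⟩
    have hl0 : l 0 = (c : ℝ) := by
      have h : ((a + b : ℤ) : ℝ) = ((c + c : ℤ) : ℝ) := by rw [← hc]
      push_cast at h ⊢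
      linarith [h2l0, h]
    have h := hd i
    push_cast
    linarith
  · right
    intro i
    refine ⟨c + d i, ?_⟩
    have hl0 : l 0 = (c : ℝ) + 1/2 := by
      have h : ((a + b : ℤ) : ℝ) = ((2 * c + 1 : ℤ) : ℝ) := by rw [← hc]
      push_cast at h ⊢
      linarith [h2l0, h]
    have h := hd i
    push_cast
    linarith

lemma aux_dual_eq : dualSet E8 = E8 :=
  le_antisymm aux_dual_subset_E8 aux_E8_subset_dual

lemma aux_zero_mem_E8 : (0 : EuclideanSpace ℝ (Fin 8)) ∈ E8 :=
  ⟨Or.inl fun i => ⟨0, by simp⟩, ⟨0, by simp⟩⟩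

lemma aux_zero_mem_vor (L : Set (EuclideanSpace ℝ (Fin 8))) :
    (0 : EuclideanSpace ℝ (Fin 8)) ∈ vorCell L := by
  intro m hm
  simp only [norm_zero]
  exact norm_nonneg _

lemma aux_vor_of_inner (u m : EuclideanSpace ℝ (Fin 8)) (h : 2 * ⟪u, m⟫ ≤ ⟪m, m⟫) :
    ‖u‖ ≤ ‖u - m‖ := by
  have h2 : ‖u‖^2 ≤ ‖u - m‖^2 := by
    rw [norm_sub_sq_real]
    have := real_inner_self_eq_norm_sq m
    linarith
  have h3 := Real.sqrt_le_sqrt h2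
  rwa [Real.sqrt_sq (norm_nonneg _), Real.sqrt_sq (norm_nonneg _)] at h3

/-- the root `(1,1,0,…,0)` -/
noncomputable def rho : EuclideanSpace ℝ (Fin 8) := tv 0 1 1

lemma aux_rho_mem_E8 : rho ∈ E8 := tv_mem 0 1 (by decide) 1 (Or.inl rfl)

lemma aux_rho_ne_zero : rho ≠ 0 := by
  intro h
  have h0 : rho 0 = 0 := by rw [h]; rfl
  rw [rho, tv_apply] at h0
  norm_num at h0

/-- The key inequality: for `l ∈ E8`, `l 0 + l 1 ≤ ⟪l, l⟫`. -/
lemma aux_key_ineq (l : EuclideanSpace ℝ (Fin 8)) (hl : l ∈ E8) :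
    l 0 + l 1 ≤ ⟪l, l⟫ := by
  obtain ⟨hint, -⟩ := hl
  rw [aux_inner_eq, Fin.sum_univ_eight]
  rcases hint with h | h
  · choose a ha using h
    simp only [ha]
    have key : ∀ i : Fin 8, (a i : ℝ) ≤ (a i : ℝ) * a i := by
      intro i
      have h' : (0:ℝ) ≤ (a i : ℝ) * ((a i : ℝ) - 1) := by exact_mod_cast aux_int_mul_pred (a i)
      nlinarith
    have hs : ∀ i : Fin 8, (0:ℝ) ≤ (a i : ℝ) * a i := fun i => mul_self_nonneg _
    linarith [key 0, key 1, hs 2, hs 3, hs 4, hs 5, hs 6, hs 7]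
  · choose a ha using h
    simp only [ha]
    have hs : ∀ i : Fin 8, (0:ℝ) ≤ (a i : ℝ) * a i + a i := by
      intro i
      have h' : (0:ℝ) ≤ (a i : ℝ) * ((a i : ℝ) + 1) := by exact_mod_cast aux_int_mul_succ (a i)
      nlinarith
    nlinarith [hs 0, hs 1, hs 2, hs 3, hs 4, hs 5, hs 6, hs 7,
      sq_nonneg ((a 0 : ℝ)), sq_nonneg ((a 1 : ℝ))]

lemma aux_rho_mem_smul : rho ∈ (2 : ℝ) • vorCell (dualSet E8) := by
  refine ⟨(2:ℝ)⁻¹ • rho, ?_, ?_⟩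
  · intro m hm
    rw [aux_dual_eq] at hm
    apply aux_vor_of_inner
    have hinner : ⟪rho, m⟫ = m 0 + m 1 := by
      rw [rho, tv_inner 0 1 (by decide)]; ring
    rw [real_inner_smul_left, hinner]
    have key := aux_key_ineq m hm
    linarith
  · show (2:ℝ) • ((2:ℝ)⁻¹ • rho) = rho
    rw [smul_inv_smul₀ (by norm_num : (2:ℝ) ≠ 0)]

lemma aux_zero_mem_E8pts (d : ℕ) : (0 : EuclideanSpace ℝ (Fin 8)) ∈ E8pts d :=
  ⟨aux_zero_mem_E8, ⟨0, aux_zero_mem_vor _, smul_zero _⟩⟩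

end Aux

/-- the `E8` lattice is self-dual, `Ω_1 = {0}` while `Ω_2 ≠ {0}`, so
`Ω_1 + Ω_1` is a proper subset of `Ω_2`. -/
theorem E8_selfdual_and_strict_inclusion :
    dualSet E8 = E8 ∧ E8pts 1 = {0} ∧ E8pts 2 ≠ {0} ∧ E8pts 1 + E8pts 1 ⊂ E8pts 2 := by
  have h1 : E8pts 1 = {0} := by
    ext x
    simp only [E8pts, Set.mem_inter_iff, Set.mem_singleton_iff]
    constructor
    · rintro ⟨hx, hsm⟩
      rw [Set.mem_smul_set] at hsm
      obtain ⟨y, hy, hxy⟩ := hsm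
      have hyx : y = x := by rw [← hxy]; norm_num
      rw [hyx] at hy
      have hle := hy x (aux_E8_subset_dual hx)
      simp only [sub_self, norm_zero] at hle
      exact norm_le_zero_iff.mp hle
    · rintro rfl
      exact aux_zero_mem_E8pts 1
  have hrho2 : rho ∈ E8pts 2 := by
    refine ⟨aux_rho_mem_E8, ?_⟩
    have hc : ((2:ℕ):ℝ) = (2:ℝ) := by norm_num
    rw [hc]
    exact aux_rho_mem_smul
  have h2 : E8pts 2 ≠ {0} := by
    intro h
    exact aux_rho_ne_zero (by rw [h] at hrho2; exact hrho2)
  refine ⟨aux_dual_eq, h1, h2, ?_⟩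
  rw [h1]
  constructor
  · intro x hx
    obtain ⟨p, hp, q, hq, rfl⟩ := hx
    rw [Set.mem_singleton_iff] at hp hq
    subst hp; subst hq
    simpa using aux_zero_mem_E8pts 2
  · intro hsub
    apply aux_rho_ne_zero
    have h := hsub hrho2
    simpa using h
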